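/- Let f be the Fibonacci sequence with f 0 = 1, f 1 = 1, f (n+2) = f (n+1) + f n. Consider the substitution system on the alphabet {B, O, Y, G} with rules B → BO, O → BYO, Y → BYG, G → BYG. Starting from the single letter G at level 0, the total number of letters at level n equals f (2n+1). -/

import Mathlib

inductive Letter | B | O | Y | G
deriving DecidableEq

def sub : Letter → List Letter
  | .B => [.B, .O]
  | .O => [.B, .Y, .O]
  | .Y => [.B, .Y, .G]
  | .G => [.B, .Y, .G]

/-- Level `n` of the substitution system, starting from the single letter `G`. -/
def level : ℕ → List Letter
  | 0 => [.G]
  | n + 1 => (level n).flatMap sub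

/-- Fibonacci sequence with `f 0 = f 1 = 1`. -/
def f : ℕ → ℕ
  | 0 => 1
  | 1 => 1
  | n + 2 => f (n + 1) + f n

/-!
Every image `sub a` contains exactly one `B`, so level `n + 1` has as many `B`s as level `n` has
letters. Since `B` has an image of length 2 and every other letter one of length 3, this gives
`L (n + 2) + L n = 3 * L (n + 1)` for the lengths `L n`, the same recurrence as the one satisfied
by the odd-indexed Fibonacci numbers `f (2 * n + 1)`.
-/

theorem count_B_flatMap_sub (l : List Letter) : (l.flatMap sub).count .B = l.length := by
  induction l with
  | nil => rfl
  | cons a l ih => cases a <;> simp [sub, ih]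

theorem length_flatMap_sub_add_count_B (l : List Letter) :
    (l.flatMap sub).length + l.count .B = 3 * l.length := by
  induction l with
  | nil => rfl
  | cons a l ih => cases a <;> simp [sub, -List.length_flatMap] <;> omega

theorem length_level_add_two_add (n : ℕ) :
    (level (n + 2)).length + (level n).length = 3 * (level (n + 1)).length := by
  rw [← count_B_flatMap_sub (level n)]
  exact length_flatMap_sub_add_count_B (level (n + 1))

theorem f_add_four_add (k : ℕ) : f (k + 4) + f k = 3 * f (k + 2) := by
  simp only [f]
  omega

theorem levels_count_fib : ∀ n : ℕ, (level n).length = f (2 * n + 1) := by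
  intro n
  induction n using Nat.twoStepInduction with
  | zero => rfl
  | one => rfl
  | more n ih₀ ih₁ =>
    have hlevel := length_level_add_two_add n
    have hfib := f_add_four_add (2 * n + 1)
    rw [ih₀, ih₁] at hlevel
    rw [show 2 * (n + 2) + 1 = 2 * n + 1 + 4 by ring]
    rw [show 2 * (n + 1) + 1 = 2 * n + 1 + 2 by ring] at hlevel
    omega
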